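/- General dual-lattice shift of the generalized Appell function: let m ∈ Λ* and write m = m^∥ + m^⊥, where m^∥ is the B-orthogonal projection of m onto the ℝ-span of d_1,…,d_M and m^⊥ = m − m^∥. Then Φ_{μ+m,ν+m^∥}(τ,u,v,{d_r}) = e^{2πi B(m^∥,u) + 2πi B(v,m^⊥)} · e^{πiτ Q(m^⊥)} · Φ_{μ,ν}(τ, u, v+mτ, {d_r}). -/

import Mathlib

open scoped BigOperators Real
open Complex

/-- The complex bilinear form `B(x,y) = xᵀ 𝐀 y` attached to an integer matrix `𝐀`,
extended bilinearly to `ℂ^N`. -/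
noncomputable def bilC {N : ℕ} (A : Matrix (Fin N) (Fin N) ℤ) (x y : Fin N → ℂ) : ℂ :=
  ∑ i, ∑ j, x i * (A i j : ℂ) * y j

/-- The real bilinear form `B(x,y) = xᵀ 𝐀 y`. -/
noncomputable def bilR {N : ℕ} (A : Matrix (Fin N) (Fin N) ℤ) (x y : Fin N → ℝ) : ℝ :=
  ∑ i, ∑ j, x i * (A i j : ℝ) * y j

/-- The generalized Appell function `Φ_{μ,ν}(τ,u,v,{d_r})`:
`e^{2πi B(ν,u)} · Σ_{k ∈ ℤ^N} e^{πiτ Q(k+μ−ν) + 2πiτ B(ν,k+μ−ν) + 2πi B(v,k+μ−ν)}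
  / ∏_{r=1}^M (1 − e^{2πi B(d_r,u)} e^{2πiτ B(d_r,k+μ−ν)})`. -/
noncomputable def appellPhi {N M : ℕ} (A : Matrix (Fin N) (Fin N) ℤ)
    (d : Fin M → Fin N → ℤ) (τ : ℂ) (u v : Fin N → ℂ) (μ ν : Fin N → ℝ) : ℂ :=
  Complex.exp (2 * (π : ℂ) * I * bilC A (fun i => (ν i : ℂ)) u) *
  ∑' k : Fin N → ℤ,
    Complex.exp ((π : ℂ) * I * τ *
        bilC A (fun i => (k i : ℂ) + (μ i : ℂ) - (ν i : ℂ))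
               (fun i => (k i : ℂ) + (μ i : ℂ) - (ν i : ℂ))
      + 2 * (π : ℂ) * I * τ *
        bilC A (fun i => (ν i : ℂ)) (fun i => (k i : ℂ) + (μ i : ℂ) - (ν i : ℂ))
      + 2 * (π : ℂ) * I *
        bilC A v (fun i => (k i : ℂ) + (μ i : ℂ) - (ν i : ℂ))) /
    ∏ r, (1 - Complex.exp (2 * (π : ℂ) * I * bilC A (fun i => (d r i : ℂ)) u) *
      Complex.exp (2 * (π : ℂ) * I * τ *
        bilC A (fun i => (d r i : ℂ)) (fun i => (k i : ℂ) + (μ i : ℂ) - (ν i : ℂ))))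

/-!
No reindexing of the lattice sum is needed: the summation point `k + (μ + m) - (ν + m∥)` is
`(k + μ - ν) + m⊥`, and `m⊥` is `B`-orthogonal to every `d_r`, hence to `ν` and `m∥`. So the
denominators do not change, and expanding `Q` and `B` in the numerator, using the symmetry of `B`,
turns the extra terms into the factor `e^{πiτ Q(m⊥) + 2πi B(v,m⊥)}` times the shift `v ↦ v + mτ`.
-/

section BilinearForm

variable {N : ℕ} (A : Matrix (Fin N) (Fin N) ℤ)

lemma bilC_add_left (x x' y : Fin N → ℂ) : bilC A (x + x') y = bilC A x y + bilC A x' y := by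
  simp [bilC, add_mul, Finset.sum_add_distrib]

lemma bilC_add_right (x y y' : Fin N → ℂ) : bilC A x (y + y') = bilC A x y + bilC A x y' := by
  simp [bilC, mul_add, Finset.sum_add_distrib]

lemma bilC_smul_left (c : ℂ) (x y : Fin N → ℂ) : bilC A (c • x) y = c * bilC A x y := by
  simp only [bilC, Pi.smul_apply, smul_eq_mul, Finset.mul_sum, mul_assoc]

lemma bilC_comm (hA : A.IsSymm) (x y : Fin N → ℂ) : bilC A x y = bilC A y x := by
  rw [bilC, Finset.sum_comm, bilC]
  refine Finset.sum_congr rfl fun i _ => Finset.sum_congr rfl fun j _ => ?_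
  rw [hA.apply i j]; ring

lemma bilC_ofReal (x y : Fin N → ℝ) :
    bilC A (fun i => (x i : ℂ)) (fun i => (y i : ℂ)) = bilR A x y := by
  simp only [bilC, bilR]; push_cast; rfl

lemma bilR_eq_zero_of_mem_span {s : Set (Fin N → ℝ)} {y : Fin N → ℝ}
    (h : ∀ x ∈ s, bilR A x y = 0) {x : Fin N → ℝ} (hx : x ∈ Submodule.span ℝ s) :
    bilR A x y = 0 := by
  induction hx using Submodule.span_induction with
  | mem x hxs => exact h x hxs
  | zero => simp [bilR]
  | add x x' _ _ hx hx' =>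
    simp only [bilR, Pi.add_apply, add_mul, Finset.sum_add_distrib] at hx hx' ⊢
    rw [hx, hx', add_zero]
  | smul c x _ hx =>
    simp only [bilR, Pi.smul_apply, smul_eq_mul, mul_assoc, ← Finset.mul_sum] at hx ⊢
    rw [hx, mul_zero]

end BilinearForm

section Summand

variable {N M : ℕ} (A : Matrix (Fin N) (Fin N) ℤ) (d : Fin M → Fin N → ℤ) (τ : ℂ)
  (u v ν : Fin N → ℂ)

noncomputable def appellTerm (w : Fin N → ℂ) : ℂ :=
  Complex.exp ((π : ℂ) * I * τ * bilC A w w + 2 * (π : ℂ) * I * τ * bilC A ν w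
      + 2 * (π : ℂ) * I * bilC A v w) /
    ∏ r, (1 - Complex.exp (2 * (π : ℂ) * I * bilC A (fun i => (d r i : ℂ)) u) *
      Complex.exp (2 * (π : ℂ) * I * τ * bilC A (fun i => (d r i : ℂ)) w))

lemma appellPhi_eq_tsum_appellTerm (μ ν : Fin N → ℝ) :
    appellPhi A d τ u v μ ν = Complex.exp (2 * (π : ℂ) * I * bilC A (fun i => (ν i : ℂ)) u) *
      ∑' k : Fin N → ℤ, appellTerm A d τ u v (fun i => (ν i : ℂ))
        (fun i => (k i : ℂ) + (μ i : ℂ) - (ν i : ℂ)) :=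
  rfl

lemma appellTerm_add (hA : A.IsSymm) (q p w : Fin N → ℂ)
    (hd : ∀ r, bilC A (fun i => (d r i : ℂ)) p = 0) (hν : bilC A ν p = 0)
    (hq : bilC A q p = 0) :
    appellTerm A d τ u v (ν + q) (w + p) =
      Complex.exp ((π : ℂ) * I * τ * bilC A p p + 2 * (π : ℂ) * I * bilC A v p) *
        appellTerm A d τ u (v + τ • (q + p)) ν w := by
  simp only [appellTerm, bilC_add_left, bilC_add_right, bilC_smul_left, hd, hν, hq, add_zero,
    bilC_comm A hA p w]
  rw [mul_div_assoc', ← Complex.exp_add]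
  congr 2
  ring

end Summand

theorem appellPhi_dual_shift_general
    {N M : ℕ}
    (A : Matrix (Fin N) (Fin N) ℤ) (hAsymm : A.IsSymm)
    (d : Fin M → Fin N → ℤ)
    (τ : ℂ) (u v : Fin N → ℂ)
    (μ ν : Fin N → ℝ)
    (hν : ν ∈ Submodule.span ℝ (Set.range (fun r => fun i => (d r i : ℝ))))
    (m : Fin N → ℝ)
    (mpar : Fin N → ℝ)
    (hpar : mpar ∈ Submodule.span ℝ (Set.range (fun r => fun i => (d r i : ℝ))))
    (hperp : ∀ r : Fin M, bilR A (fun i => (d r i : ℝ)) (fun i => m i - mpar i) = 0) :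
    appellPhi A d τ u v (fun i => μ i + m i) (fun i => ν i + mpar i) =
      Complex.exp (2 * (π : ℂ) * I * bilC A (fun i => (mpar i : ℂ)) u
          + 2 * (π : ℂ) * I * bilC A v (fun i => ((m i - mpar i : ℝ) : ℂ))) *
        Complex.exp ((π : ℂ) * I * τ *
          bilC A (fun i => ((m i - mpar i : ℝ) : ℂ)) (fun i => ((m i - mpar i : ℝ) : ℂ))) *
        appellPhi A d τ u (fun i => v i + (m i : ℂ) * τ) μ ν := by
  set mperp : Fin N → ℂ := fun i => ((m i - mpar i : ℝ) : ℂ)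
  have horth : ∀ x ∈ Submodule.span ℝ (Set.range (fun r => fun i => (d r i : ℝ))),
      bilC A (fun i => (x i : ℂ)) mperp = 0 := fun x hx => by
    rw [bilC_ofReal, bilR_eq_zero_of_mem_span A (by rintro _ ⟨r, rfl⟩; exact hperp r) hx,
      Complex.ofReal_zero]
  have hsplit : (fun i => ((ν i + mpar i : ℝ) : ℂ)) =
      (fun i => (ν i : ℂ)) + fun i => (mpar i : ℂ) := by
    ext i; push_cast; rfl
  have hterm (k : Fin N → ℤ) :
      appellTerm A d τ u v (fun i => ((ν i + mpar i : ℝ) : ℂ))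
          (fun i => (k i : ℂ) + ((μ i + m i : ℝ) : ℂ) - ((ν i + mpar i : ℝ) : ℂ)) =
        Complex.exp ((π : ℂ) * I * τ * bilC A mperp mperp + 2 * (π : ℂ) * I * bilC A v mperp) *
          appellTerm A d τ u (fun i => v i + (m i : ℂ) * τ) (fun i => (ν i : ℂ))
            (fun i => (k i : ℂ) + (μ i : ℂ) - (ν i : ℂ)) := by
    have hw : (fun i => (k i : ℂ) + ((μ i + m i : ℝ) : ℂ) - ((ν i + mpar i : ℝ) : ℂ)) =
        (fun i => (k i : ℂ) + (μ i : ℂ) - (ν i : ℂ)) + mperp := by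
      ext i; simp only [mperp, Pi.add_apply]; push_cast; ring
    have hv : (fun i => v i + (m i : ℂ) * τ) = v + τ • ((fun i => (mpar i : ℂ)) + mperp) := by
      ext i; simp only [mperp, Pi.add_apply, Pi.smul_apply, smul_eq_mul]; push_cast; ring
    rw [hsplit, hw, hv]
    exact appellTerm_add A d τ u v _ hAsymm _ mperp _
      (fun r => by simpa using horth _ (Submodule.subset_span ⟨r, rfl⟩)) (horth ν hν)
      (horth mpar hpar)
  rw [appellPhi_eq_tsum_appellTerm, appellPhi_eq_tsum_appellTerm, tsum_congr hterm, tsum_mul_left,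
    hsplit, bilC_add_left, mul_add, Complex.exp_add, Complex.exp_add, Complex.exp_add]
  ring

/-- General dual-lattice shift of the generalized Appell function: for `m ∈ Λ*`
with `B`-orthogonal decomposition `m = m∥ + m⊥` relative to the span of `d_1,…,d_M`,
`Φ_{μ+m,ν+m∥}(τ,u,v,{d_r})
  = e^{2πi B(m∥,u) + 2πi B(v,m⊥)} · e^{πiτ Q(m⊥)} · Φ_{μ,ν}(τ, u, v+mτ, {d_r})`. -/
theorem appellPhi_dual_shift
    {N M : ℕ} (hN : 1 ≤ N) (hM : 1 ≤ M) (hMN : M ≤ N)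
    (A : Matrix (Fin N) (Fin N) ℤ) (hAsymm : A.IsSymm)
    (hApos : (A.map ((↑) : ℤ → ℝ)).PosDef)
    (d : Fin M → Fin N → ℤ)
    (hd : LinearIndependent ℝ (fun r => fun i => (d r i : ℝ)))
    (τ : ℂ) (hτ : 0 < τ.im) (u v : Fin N → ℂ)
    (μ ν : Fin N → ℝ)
    (hν : ν ∈ Submodule.span ℝ (Set.range (fun r => fun i => (d r i : ℝ))))
    (m : Fin N → ℝ)
    (hm : ∀ i : Fin N, ∃ z : ℤ, (∑ j, (A i j : ℝ) * m j) = (z : ℝ))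
    (mpar : Fin N → ℝ)
    (hpar : mpar ∈ Submodule.span ℝ (Set.range (fun r => fun i => (d r i : ℝ))))
    (hperp : ∀ r : Fin M, bilR A (fun i => (d r i : ℝ)) (fun i => m i - mpar i) = 0) :
    appellPhi A d τ u v (fun i => μ i + m i) (fun i => ν i + mpar i) =
      Complex.exp (2 * (π : ℂ) * I * bilC A (fun i => (mpar i : ℂ)) u
          + 2 * (π : ℂ) * I * bilC A v (fun i => ((m i - mpar i : ℝ) : ℂ))) *
        Complex.exp ((π : ℂ) * I * τ *
          bilC A (fun i => ((m i - mpar i : ℝ) : ℂ)) (fun i => ((m i - mpar i : ℝ) : ℂ))) *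
        appellPhi A d τ u (fun i => v i + (m i : ℂ) * τ) μ ν :=
  appellPhi_dual_shift_general A hAsymm d τ u v μ ν hν m mpar hpar hperp
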